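/- arXiv:0801.1462 — 2 statements merged into one kernel-verified Lean document; each statement's English description precedes it below -/
import Mathlib

section
/- Let R be a ring, F a class of left R-modules defining a homological dimension and closed under finite direct sums. For a short exact sequence 0 → A → B → C → 0: if A and B have F-dimension ≤ i, then C has F-dimension ≤ i + 1. -/
open CategoryTheory

universe u

noncomputable section

variable {R : Type u} [Ring R]

/-- Membership in `F ∪ {0}`. -/
def MemF0 (F : ModuleCat.{u} R → Prop) (M : ModuleCat.{u} R) : Prop :=
  F M ∨ Subsingleton M

/-- There is a short exact sequence `0 → A → B → C → 0`. -/
def IsSES {R : Type u} [Ring R] (A B C : ModuleCat.{u} R) : Prop :=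
  ∃ (f : A ⟶ B) (g : B ⟶ C),
    Function.Injective f ∧ Function.Surjective g ∧ Function.Exact f g

/-- `FDimLE F n M` : `M` has left `F`-dimension `≤ n`, i.e. there is an exact sequence
`0 → F_n → ⋯ → F_0 → M → 0` with all `F_j ∈ F ∪ {0}`. -/
def FDimLE (F : ModuleCat.{u} R → Prop) : ℕ → ModuleCat.{u} R → Prop
  | 0, M => MemF0 F M
  | n + 1, M => ∃ K F0 : ModuleCat.{u} R, MemF0 F F0 ∧ IsSES K F0 M ∧ FDimLE F n K

/-- `M` admits a (possibly infinite) `F`-resolution `⋯ → F_1 → F_0 → M → 0`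
with all terms in `F ∪ {0}`. -/
def HasFRes (F : ModuleCat.{u} R → Prop) (M : ModuleCat.{u} R) : Prop :=
  ∃ K Fo : ℕ → ModuleCat.{u} R, K 0 = M ∧
    ∀ n, MemF0 F (Fo n) ∧ IsSES (K (n + 1)) (Fo n) (K n)

/-- `IsFKernel F n K X` : there is an exact sequence
`0 → K → F_n → ⋯ → F_0 → X → 0` with all `F_i ∈ F`. -/
def IsFKernel (F : ModuleCat.{u} R → Prop) : ℕ → ModuleCat.{u} R → ModuleCat.{u} R → Prop
  | 0, K, X => ∃ F0, F F0 ∧ IsSES K F0 X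
  | n + 1, K, X => ∃ K1 F0, F F0 ∧ IsSES K1 F0 X ∧ IsFKernel F n K K1

/-- The class `F` defines a homological dimension. -/
def DefinesHomDim (F : ModuleCat.{u} R → Prop) : Prop :=
  (∀ K Fm M : ModuleCat.{u} R, F Fm → IsSES K Fm M → HasFRes F M → HasFRes F K) ∧
  (∀ (n : ℕ) (K X : ModuleCat.{u} R), FDimLE F (n + 1) X → IsFKernel F n K X → F K)

/-- `M` is a homomorphic image of a module in `F`. -/
def IsImageOfF (F : ModuleCat.{u} R → Prop) (M : ModuleCat.{u} R) : Prop :=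
  ∃ F0 : ModuleCat.{u} R, F F0 ∧ ∃ g : F0 ⟶ M, Function.Surjective g

/-- `F` is closed under finite (binary) direct sums. -/
def ClosedUnderFinSums (F : ModuleCat.{u} R → Prop) : Prop :=
  ∀ A B : ModuleCat.{u} R, F A → F B → F (ModuleCat.of R (A × B))

/-- The class of homomorphic images of modules in `F` is closed under extensions. -/
def ImagesClosedUnderExt (F : ModuleCat.{u} R → Prop) : Prop :=
  ∀ (A B C : ModuleCat.{u} R) (f : A ⟶ B) (g : B ⟶ C),
    Function.Injective f → Function.Surjective g → Function.Exact f g →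
      IsImageOfF F A → IsImageOfF F C → IsImageOfF F B

/-- `Ext^i(M, N)` vanishes. -/
def ExtZero {R : Type u} [Ring R] (i : ℕ) (M N : ModuleCat.{u} R) : Prop :=
  Subsingleton (((Ext ℤ (ModuleCat.{u} R) i).obj (Opposite.op M)).obj N)

end

/-!
Induct on `i`. Choose `0 → K_A → P → A → 0` and `0 → K_B → Q → B → 0` with `P, Q ∈ F` and
`K_A, K_B` of `F`-dimension `≤ n`. The pullback `X = Q ×_B P` sits in exact sequences
`0 → X → Q ⊕ P → B → 0` and `0 → K_A → X → L → 0`, where `L = ker (Q → C)`. Since `Q ⊕ P ∈ F`,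
the first gives `X` an `F`-resolution by axiom (1) and then `F`-dim `X ≤ n` by axiom (2); the second
gives `F`-dim `L ≤ n + 1` by induction, hence `F`-dim `C ≤ n + 2`. If `Q = 0` then `C = 0`, and if
`P = 0` then `A = 0`, so `Q → B ≅ C` already has kernel `K_B`.
-/

section

variable {R : Type u} [Ring R] {F : ModuleCat.{u} R → Prop}

lemma isSES_of_subsingleton {A B C : ModuleCat.{u} R} [Subsingleton A] [Subsingleton B]
    [Subsingleton C] : IsSES A B C :=
  ⟨0, 0, Function.injective_of_subsingleton _, fun _ => ⟨0, Subsingleton.elim _ _⟩,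
    fun _ => ⟨fun _ => ⟨0, Subsingleton.elim _ _⟩, fun _ => Subsingleton.elim _ _⟩⟩

lemma isSES_punit (M : ModuleCat.{u} R) : IsSES (ModuleCat.of R PUnit) M M :=
  ⟨0, 𝟙 M, Function.injective_of_subsingleton _, fun m => ⟨m, rfl⟩,
    fun m => ⟨fun h => ⟨0, h.symm⟩, by rintro ⟨z, rfl⟩; rfl⟩⟩

lemma isSES_ker {M N : ModuleCat.{u} R} (φ : M →ₗ[R] N) (hφ : Function.Surjective φ) :
    IsSES (ModuleCat.of R (LinearMap.ker φ)) M N :=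
  ⟨ModuleCat.ofHom (LinearMap.ker φ).subtype, ModuleCat.ofHom φ, Submodule.injective_subtype _,
    hφ, LinearMap.exact_subtype_ker_map φ⟩

lemma fDimLE_of_subsingleton {M : ModuleCat.{u} R} [Subsingleton M] : ∀ n, FDimLE F n M
  | 0 => Or.inr ‹_›
  | n + 1 => ⟨M, M, Or.inr ‹_›, isSES_of_subsingleton, fDimLE_of_subsingleton n⟩

lemma FDimLE.succ : ∀ {n : ℕ} {M : ModuleCat.{u} R}, FDimLE F n M → FDimLE F (n + 1) M
  | 0, M, h => ⟨_, M, h, isSES_punit M, fDimLE_of_subsingleton 0⟩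
  | _ + 1, _, ⟨K, F0, hF0, h, hK⟩ => ⟨K, F0, hF0, h, hK.succ⟩

lemma FDimLE.mono {m n : ℕ} {M : ModuleCat.{u} R} (h : FDimLE F m M) (hmn : m ≤ n) :
    FDimLE F n M := by
  induction hmn with
  | refl => exact h
  | step _ ih => exact ih.succ

lemma fDimLE_of_resolution : ∀ (m : ℕ) (K Fo : ℕ → ModuleCat.{u} R),
    (∀ l, MemF0 F (Fo l) ∧ IsSES (K (l + 1)) (Fo l) (K l)) → MemF0 F (K m) → FDimLE F m (K 0)
  | 0, _, _, _, hK => hK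
  | m + 1, K, Fo, hres, hK =>
    ⟨K 1, Fo 0, (hres 0).1, (hres 0).2,
      fDimLE_of_resolution m (Stream'.tail K) (Stream'.tail Fo) (fun l => hres (l + 1)) hK⟩

lemma isFKernel_of_resolution : ∀ (m : ℕ) (K Fo : ℕ → ModuleCat.{u} R),
    (∀ l, IsSES (K (l + 1)) (Fo l) (K l)) → (∀ l ≤ m, F (Fo l)) →
    IsFKernel F m (K (m + 1)) (K 0)
  | 0, _, Fo, hres, hFo => ⟨Fo 0, hFo 0 le_rfl, hres 0⟩
  | m + 1, K, Fo, hres, hFo =>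
    ⟨K 1, Fo 0, hFo 0 (Nat.zero_le _), hres 0,
      isFKernel_of_resolution m (Stream'.tail K) (Stream'.tail Fo) (fun l => hres (l + 1))
        (fun l hl => hFo (l + 1) (Nat.succ_le_succ hl))⟩

lemma hasFRes_of_subsingleton (M : ModuleCat.{u} R) [Subsingleton M] : HasFRes F M :=
  ⟨fun _ => M, fun _ => M, rfl, fun _ => ⟨Or.inr ‹_›, isSES_of_subsingleton⟩⟩

lemma HasFRes.of_isSES {K F0 M : ModuleCat.{u} R} (hK : HasFRes F K) (hF0 : MemF0 F F0)
    (h : IsSES K F0 M) : HasFRes F M := by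
  obtain ⟨Ks, Fs, rfl, hres⟩ := hK
  exact ⟨Stream'.cons M Ks, Stream'.cons F0 Fs, rfl, fun | 0 => ⟨hF0, h⟩ | j + 1 => hres j⟩

lemma FDimLE.hasFRes : ∀ {n : ℕ} {M : ModuleCat.{u} R}, FDimLE F n M → HasFRes F M
  | 0, M, h => (hasFRes_of_subsingleton (ModuleCat.of R PUnit)).of_isSES h (isSES_punit M)
  | _ + 1, _, ⟨_, _, hF0, h, hK⟩ => hK.hasFRes.of_isSES hF0 h

lemma fDimLE_of_isSES_of_fDimLE_succ (hF : DefinesHomDim F) {n : ℕ} {X G M : ModuleCat.{u} R}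
    (hX : HasFRes F X) (hG : F G) (h : IsSES X G M) (hM : FDimLE F (n + 1) M) :
    FDimLE F n X := by
  obtain ⟨K, Fo, rfl, hres⟩ := hX
  by_cases hFo : ∀ l < n, F (Fo l)
  · -- `0 → K n → Fo (n - 1) → ⋯ → Fo 0 → G → M → 0` has all its middle terms in `F`.
    have hker : IsFKernel F n (K n) M :=
      isFKernel_of_resolution n (Stream'.cons M K) (Stream'.cons G Fo)
        (fun | 0 => h | l + 1 => (hres l).2)
        (fun | 0, _ => hG | l + 1, hl => hFo l hl)
    exact fDimLE_of_resolution n K Fo hres (Or.inl (hF.2 n _ M hM hker))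
  · push Not at hFo
    obtain ⟨j, hjn, hj⟩ := hFo
    have : Subsingleton (Fo j) := (hres j).1.resolve_left hj
    obtain ⟨a, -, ha, -, -⟩ := (hres j).2
    exact (fDimLE_of_resolution (j + 1) K Fo hres (Or.inr ha.subsingleton)).mono hjn

/-- The kernel of `(q, p) ↦ π q - f (α p)` is the pullback of `π` and `f ∘ α`. -/
def pullbackDiff {A B P Q : ModuleCat.{u} R} (π : Q ⟶ B) (f : A ⟶ B) (α : P ⟶ A) :
    (Q × P) →ₗ[R] B :=
  π.hom.coprod (-(f.hom ∘ₗ α.hom))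

lemma mem_ker_pullbackDiff {A B P Q : ModuleCat.{u} R} {π : Q ⟶ B} {f : A ⟶ B} {α : P ⟶ A}
    {x : Q × P} : x ∈ LinearMap.ker (pullbackDiff π f α) ↔ π x.1 = f (α x.2) := by
  simp [pullbackDiff, ← sub_eq_add_neg, sub_eq_zero]

lemma pullbackDiff_surjective {A B P Q : ModuleCat.{u} R} {π : Q ⟶ B} (hπ : Function.Surjective π)
    (f : A ⟶ B) (α : P ⟶ A) : Function.Surjective (pullbackDiff π f α) := fun b =>
  let ⟨q, hq⟩ := hπ b
  ⟨(q, 0), by simp [pullbackDiff, hq]⟩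

lemma isSES_ker_pullbackDiff {A B C K P Q : ModuleCat.{u} R} {f : A ⟶ B} {g : B ⟶ C}
    (hf : Function.Injective f) (hfg : Function.Exact f g) {κ : K ⟶ P} {α : P ⟶ A}
    (hκ : Function.Injective κ) (hα : Function.Surjective α) (hκα : Function.Exact κ α)
    (π : Q ⟶ B) :
    IsSES K (ModuleCat.of R (LinearMap.ker (pullbackDiff π f α)))
      (ModuleCat.of R (LinearMap.ker (g.hom ∘ₗ π.hom))) := by
  let u : K →ₗ[R] LinearMap.ker (pullbackDiff π f α) :=
    LinearMap.codRestrict _ (LinearMap.inr R Q P ∘ₗ κ.hom) fun k =>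
      mem_ker_pullbackDiff.2 (by simp [hκα.apply_apply_eq_zero k])
  let v : LinearMap.ker (pullbackDiff π f α) →ₗ[R] LinearMap.ker (g.hom ∘ₗ π.hom) :=
    (LinearMap.fst R Q P).restrict fun x hx => by
      rw [mem_ker_pullbackDiff] at hx
      simp [hx, hfg.apply_apply_eq_zero]
  refine ⟨ModuleCat.ofHom u, ModuleCat.ofHom v, ?_, ?_, ?_⟩
  · exact fun k k' h => hκ (congrArg (fun x => x.1.2) h)
  · rintro ⟨q, hq⟩
    obtain ⟨a, ha⟩ := (hfg _).1 hq
    obtain ⟨p, rfl⟩ := hα a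
    exact ⟨⟨(q, p), mem_ker_pullbackDiff.2 ha.symm⟩, rfl⟩
  · rintro ⟨⟨q, p⟩, hx⟩
    have hqp := mem_ker_pullbackDiff.1 hx
    constructor
    · intro h
      obtain rfl : q = 0 := congrArg Subtype.val h
      obtain ⟨k, rfl⟩ := (hκα p).1 (hf (by rw [map_zero, ← hqp, map_zero]))
      exact ⟨k, rfl⟩
    · rintro ⟨k, hk⟩
      exact Subtype.ext (congrArg (fun x => x.1.1) hk).symm

lemma FDimLE.succ_succ_of_isSES (hF : DefinesHomDim F) (hsum : ClosedUnderFinSums F) {n : ℕ}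
    (ih : ∀ {A B C : ModuleCat.{u} R}, IsSES A B C → FDimLE F n A → FDimLE F n B →
      FDimLE F (n + 1) C)
    {A B C : ModuleCat.{u} R} (h : IsSES A B C) (hA : FDimLE F (n + 1) A)
    (hB : FDimLE F (n + 1) B) : FDimLE F (n + 2) C := by
  obtain ⟨f, g, hf, hg, hfg⟩ := h
  obtain ⟨K_B, Q, hQ | hQ, ⟨β, π, hβ, hπ, hβπ⟩, hKB⟩ := id hB
  swap
  · have : Subsingleton C := (hg.comp hπ).subsingleton
    exact fDimLE_of_subsingleton _
  obtain ⟨K_A, P, hP | hP, ⟨κ, α, hκ, hα, hκα⟩, hKA⟩ := hA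
  swap
  · have : Subsingleton A := hα.subsingleton
    have hg_inj : Function.Injective g := (injective_iff_map_eq_zero _).2 fun b hb => by
      obtain ⟨a, rfl⟩ := (hfg b).1 hb
      rw [Subsingleton.elim a 0, map_zero]
    exact ⟨K_B, Q, Or.inl hQ,
      ⟨β, π ≫ g, hβ, hg.comp hπ, hβπ.comp_injective _ hg_inj (map_zero g.hom)⟩, hKB.succ⟩
  have hFQP : F (ModuleCat.of R (Q × P)) := hsum Q P hQ hP
  have hX := isSES_ker (M := ModuleCat.of R (Q × P)) (pullbackDiff π f α)
    (pullbackDiff_surjective hπ f α)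
  have hdX : FDimLE F n _ :=
    fDimLE_of_isSES_of_fDimLE_succ hF (hF.1 _ _ _ hFQP hX hB.hasFRes) hFQP hX hB
  exact ⟨_, Q, Or.inl hQ, isSES_ker (g.hom ∘ₗ π.hom) (hg.comp hπ),
    ih (isSES_ker_pullbackDiff hf hfg hκ hα hκα π) hKA hdX⟩

theorem FDimLE.succ_of_isSES (hF : DefinesHomDim F) (hsum : ClosedUnderFinSums F) :
    ∀ {i : ℕ} {A B C : ModuleCat.{u} R}, IsSES A B C → FDimLE F i A → FDimLE F i B →
      FDimLE F (i + 1) C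
  | 0, _, _, _, h, hA, hB => ⟨_, _, hB, h, hA⟩
  | _ + 1, _, _, _, h, hA, hB => succ_succ_of_isSES hF hsum (succ_of_isSES hF hsum) h hA hB

end

theorem stmt5 {R : Type u} [Ring R] (F : ModuleCat.{u} R → Prop)
    (hF : DefinesHomDim F) (hsum : ClosedUnderFinSums F)
    (A B C : ModuleCat.{u} R) (f : A ⟶ B) (g : B ⟶ C)
    (hinj : Function.Injective f) (hsurj : Function.Surjective g)
    (hex : Function.Exact f g) (i : ℕ)
    (hA : FDimLE F i A) (hB : FDimLE F i B) :
    FDimLE F (i + 1) C :=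
  FDimLE.succ_of_isSES hF hsum ⟨f, g, hinj, hsurj, hex⟩ hA hB
end

section
/- Let R be a ring, n ∈ ℕ, and G a class of left R-modules each of injective dimension ≤ n. Let F = {M : Ext^i_R(M, G) = 0 for all 1 ≤ i ≤ m, G ∈ G} for some m ≥ 1. Then every left R-module has F-dimension ≤ n. -/
open CategoryTheory

universe u

noncomputable section

variable {R : Type u} [Ring R]

/-!
Dimension shifting. If `0 → K → P → M → 0` is exact with `P` projective, splicing a
projective resolution of `K` onto `P` gives one of `M`, so `Ext^{k+2}(M, -) ≅ Ext^{k+1}(K, -)`.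
Hence if `Ext^{n+1+i}(M, G) = 0` for all `i ≥ 1` then `Ext^{n+i}(K, G) = 0`, and by induction
`K` has `F`-dimension `≤ n`. For `n = 0` the hypothesis puts `M` itself in `F`.
-/

open CategoryTheory Limits

noncomputable def ChainComplex.augmentLinearYonedaObjHomologyIso {C : Type*} [Category C]
    [Abelian C] (A : Type*) [Ring A] [Linear A C] (K : ChainComplex C ℕ) {X : C}
    {f : K.X 0 ⟶ X} {w : K.d 1 0 ≫ f = 0} (Y : C) (k : ℕ) :
    ((K.augment f w).linearYonedaObj A Y).homology (k + 2) ≅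
      (K.linearYonedaObj A Y).homology (k + 1) :=
  ((K.augment f w).linearYonedaObj A Y).homologyIsoSc' (k + 1) (k + 2) (k + 3)
      (by simp) (by simp) ≪≫
    ((K.linearYonedaObj A Y).homologyIsoSc' k (k + 1) (k + 2) (by simp) (by simp)).symm

namespace CategoryTheory

variable {C : Type*} [Category C] [Abelian C]

lemma ShortComplex.Exact.precomp_epi {S : ShortComplex C} (hS : S.Exact) {X : C} (e : X ⟶ S.X₁)
    [Epi e] : (ShortComplex.mk (e ≫ S.f) S.g (by simp)).Exact :=
  (ShortComplex.exact_iff_of_epi_of_isIso_of_mono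
    (ShortComplex.Hom.mk (S₁ := ShortComplex.mk (e ≫ S.f) S.g (by simp)) (S₂ := S)
      e (𝟙 _) (𝟙 _) (by simp) (by simp))).2 hS

lemma ShortComplex.Exact.postcomp_mono {S : ShortComplex C} (hS : S.Exact) {X : C}
    (m : S.X₃ ⟶ X) [Mono m] : (ShortComplex.mk S.f (S.g ≫ m) (by simp)).Exact :=
  (ShortComplex.exact_iff_of_epi_of_isIso_of_mono
    (ShortComplex.Hom.mk (S₁ := S) (S₂ := ShortComplex.mk S.f (S.g ≫ m) (by simp))
      (𝟙 _) (𝟙 _) m (by simp) (by simp))).1 hS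

lemma ShortComplex.shortExact_kernelSequence {X Y : C} (f : X ⟶ Y) [Epi f] :
    (ShortComplex.kernelSequence f).ShortExact :=
  { exact := ShortComplex.kernelSequence_exact f
    epi_g := ‹Epi f› }

namespace ProjectiveResolution

section Augmentation

variable {Z : C} (Q : ProjectiveResolution Z)

-- `Q.π.f 0`, with codomain `Z` rather than `((ChainComplex.single₀ C).obj Z).X 0`
def augmentation : Q.complex.X 0 ⟶ Z := Q.π.f 0

instance : Epi Q.augmentation := inferInstanceAs (Epi (Q.π.f 0))

lemma d_comp_augmentation : Q.complex.d 1 0 ≫ Q.augmentation = 0 :=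
  Q.complex_d_comp_π_f_zero

lemma d_comp_augmentation_comp {W : C} (f : Z ⟶ W) :
    Q.complex.d 1 0 ≫ Q.augmentation ≫ f = 0 := by
  rw [← Category.assoc, d_comp_augmentation, zero_comp]

lemma exact_augmentation : (ShortComplex.mk _ _ Q.d_comp_augmentation).Exact :=
  Q.exact₀

end Augmentation

noncomputable def ofExact (K : ChainComplex C ℕ) [hK : ∀ n, Projective (K.X n)] {Z : C}
    (g : K.X 0 ⟶ Z) [hg : Epi g] (w : K.d 1 0 ≫ g = 0) (h₀ : (ShortComplex.mk _ _ w).Exact)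
    (h : ∀ n, K.ExactAt (n + 1)) : ProjectiveResolution Z where
  complex := K
  π := (ChainComplex.toSingle₀Equiv _ _).symm ⟨g, w⟩
  quasiIso := ⟨fun n => by
    cases n with
    | zero =>
      rw [ChainComplex.quasiIsoAt₀_iff, ShortComplex.quasiIso_iff_of_zeros']
      · refine (ShortComplex.exact_and_epi_g_iff_of_iso ?_).2 ⟨h₀, hg⟩
        exact ShortComplex.isoMk (Iso.refl _) (Iso.refl _) (Iso.refl _)
          ((Category.id_comp _).trans (Category.comp_id _).symm)
          (by
            simp only [Iso.refl_hom, HomologicalComplex.shortComplexFunctor'_map_τ₂,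
              ChainComplex.toSingle₀Equiv_symm_apply_f_zero]
            exact (Category.id_comp g).trans (Category.comp_id g).symm)
      · exact K.shape 0 0 (by simp)
      all_goals rfl
    | succ n =>
      exact (quasiIsoAt_iff_exactAt' _ _ (ChainComplex.exactAt_succ_single_obj _ _)).2 (h n)⟩

variable {S : ShortComplex C}

noncomputable def augmentOfShortExact (hS : S.ShortExact) [Projective S.X₂]
    (Q : ProjectiveResolution S.X₁) : ProjectiveResolution S.X₃ :=
  have := hS.mono_f
  ofExact (hK := by
      rintro (_ | n)
      exacts [inferInstanceAs (Projective S.X₂), inferInstanceAs (Projective (Q.complex.X n))])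
    (hg := hS.epi_g)
    (Q.complex.augment (Q.augmentation ≫ S.f) (Q.d_comp_augmentation_comp S.f))
    S.g ((Category.assoc _ _ _).trans ((Q.augmentation ≫= S.zero).trans comp_zero))
    (hS.exact.precomp_epi Q.augmentation)
    (fun n => by
      rw [HomologicalComplex.exactAt_iff' _ (n + 2) (n + 1) n (by simp) (by simp)]
      cases n with
      | zero => exact Q.exact_augmentation.postcomp_mono S.f
      | succ n => exact Q.exact_succ n)

end ProjectiveResolution

noncomputable def ShortComplex.ShortExact.extSuccIso [EnoughProjectives C] {S : ShortComplex C}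
    (hS : S.ShortExact) [Projective S.X₂] (A : Type*) [Ring A] [Linear A C] (Y : C) (k : ℕ) :
    ((Ext A C (k + 2)).obj (Opposite.op S.X₃)).obj Y ≅
      ((Ext A C (k + 1)).obj (Opposite.op S.X₁)).obj Y :=
  let Q := ProjectiveResolution.of S.X₁
  (ProjectiveResolution.augmentOfShortExact hS Q).isoExt (k + 2) Y ≪≫
    ChainComplex.augmentLinearYonedaObjHomologyIso A Q.complex
      (w := Q.d_comp_augmentation_comp S.f) Y k ≪≫
    (Q.isoExt (k + 1) Y).symm

end CategoryTheory

section Modules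

variable {R : Type u} [Ring R]

lemma extZero_of_projective (P Y : ModuleCat.{u} R) [Projective P] {i : ℕ} (hi : 1 ≤ i) :
    ExtZero i P Y := by
  obtain ⟨k, rfl⟩ : ∃ k, i = k + 1 := ⟨i - 1, by omega⟩
  exact ModuleCat.subsingleton_of_isZero (isZero_Ext_succ_of_projective P Y k)

namespace CategoryTheory.ShortComplex.ShortExact

variable {S : ShortComplex (ModuleCat.{u} R)}

lemma extZero_X₁ (hS : S.ShortExact) [Projective S.X₂] {Y : ModuleCat.{u} R} {k : ℕ}
    (h : ExtZero (k + 2) S.X₃ Y) : ExtZero (k + 1) S.X₁ Y :=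
  @Equiv.subsingleton _ _ (hS.extSuccIso ℤ Y k).symm.toLinearEquiv.toEquiv h

lemma isSES (hS : S.ShortExact) : IsSES S.X₁ S.X₂ S.X₃ :=
  ⟨S.f, S.g, hS.moduleCat_injective_f, hS.moduleCat_surjective_g,
    (moduleCat_exact_iff_function_exact S).1 hS.exact⟩

end CategoryTheory.ShortComplex.ShortExact

theorem fDimLE_of_extZero (G F : ModuleCat.{u} R → Prop)
    (hF : ∀ M, (∀ g, G g → ∀ i, 1 ≤ i → ExtZero i M g) → F M) :
    ∀ (n : ℕ) (M : ModuleCat.{u} R), (∀ g, G g → ∀ i, 1 ≤ i → ExtZero (n + i) M g) →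
      FDimLE F n M
  | 0, M, hM => Or.inl (hF M (by simpa using hM))
  | n + 1, M, hM => by
    let S := ShortComplex.kernelSequence (Projective.π M)
    have hS : S.ShortExact := ShortComplex.shortExact_kernelSequence _
    have : Projective S.X₂ := inferInstanceAs (Projective (Projective.over M))
    refine ⟨S.X₁, S.X₂, Or.inl (hF _ fun g _ i hi => extZero_of_projective _ g hi), hS.isSES,
      fDimLE_of_extZero G F hF n S.X₁ fun g hg i hi => ?_⟩
    obtain ⟨k, hk⟩ : ∃ k, n + i = k + 1 := ⟨n + i - 1, by omega⟩
    have hM' : ExtZero (k + 2) M g := by convert hM g hg i hi using 1; omega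
    rw [hk]
    exact hS.extZero_X₁ hM'

end Modules

theorem stmt12_general {R : Type u} [Ring R] (G : ModuleCat.{u} R → Prop) (n : ℕ)
    (hG : ∀ g, G g → ∀ (M : ModuleCat.{u} R) (i : ℕ), 1 ≤ i → ExtZero (n + i) M g)
    (m : ℕ) :
    ∀ M : ModuleCat.{u} R,
      FDimLE (fun M : ModuleCat.{u} R =>
        ∀ i, 1 ≤ i → i ≤ m → ∀ g, G g → ExtZero i M g) n M :=
  fun M => fDimLE_of_extZero G _ (fun _ hM i hi _ g hg => hM g hg i hi) n M
    (fun g hg => hG g hg M)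

theorem stmt12 {R : Type u} [Ring R] (G : ModuleCat.{u} R → Prop) (n : ℕ)
    (hG : ∀ g, G g → ∀ (M : ModuleCat.{u} R) (i : ℕ), 1 ≤ i → ExtZero (n + i) M g)
    (m : ℕ) (hm : 1 ≤ m) :
    ∀ M : ModuleCat.{u} R,
      FDimLE (fun M : ModuleCat.{u} R =>
        ∀ i, 1 ≤ i → i ≤ m → ∀ g, G g → ExtZero i M g) n M :=
  stmt12_general G n hG m
end
end
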